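/- arXiv:2301.12423 — 6 statements merged into one kernel-verified Lean document; each statement's English description precedes it below -/
import Mathlib

section
/- For the linear sequential explicit scheme a^{n+1} = a^n + Δt·f'·b^n, b^{n+1} = b^n + Δt·g'·a^{n+1} with f', g' ∈ ℝ constants, the discrete quantity H_n := g'·(a^n·a^{n+1})/2 − f'·(b^n)²/2 is conserved, i.e. H_{n+1} = H_n for all n. -/
/-- The discrete Hamiltonian `H n = g'·(aⁿ·aⁿ⁺¹)/2 − f'·(bⁿ)²/2` is conserved
by the sequential explicit scheme. -/
theorem stmt_1 (f' g' Δt : ℝ) (a b : ℕ → ℝ)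
    (ha : ∀ n, a (n + 1) = a n + Δt * f' * b n)
    (hb : ∀ n, b (n + 1) = b n + Δt * g' * a (n + 1)) :
    ∀ n, g' * (a (n + 1) * a (n + 2)) / 2 - f' * (b (n + 1)) ^ 2 / 2
        = g' * (a n * a (n + 1)) / 2 - f' * (b n) ^ 2 / 2 := by
  intro n
  have h1 := ha n
  have h2 := ha (n + 1)
  have h3 := hb n
  rw [show n + 1 + 1 = n + 2 from rfl] at h2
  rw [h2, h3, h1]
  ring
end

section
/- Let K be the 3×3 real antisymmetric matrix K = [[0, −k_z, k_y], [k_z, 0, −k_x], [−k_y, k_x, 0]] for a wave vector k = (k_x, k_y, k_z), and let Δt > 0 satisfy Δt·|k| < 2. Then every eigenvalue λ of the 6×6 block matrix M = [[I, −Δt·i·K], [Δt·i·K, I + Δt²·K²]] (blocks 3×3, I the identity) satisfies |λ| = 1. -/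
open Matrix Polynomial

/-!
For `μ ≠ 1` the upper left block of `μ - M` is the nonzero scalar `μ - 1`, which commutes with
everything, so the Schur complement gives `det (μ - M) = det ((μ - 1)² - μ Δt² K²)`. Since
`-K²` has eigenvalues `0, |k|², |k|²`, every eigenvalue `μ ≠ 1` of `M` is a root of
`μ² - (2 - Δt² |k|²) μ + 1`. Under the CFL condition this real quadratic has nonpositive
discriminant, so its roots are complex conjugates whose product is `1`.
-/

namespace Matrix

variable {m n R : Type*} [DecidableEq m] [DecidableEq n] [CommRing R]

theorem smul_one_sub_fromBlocks (r : R) (A : Matrix m m R) (B : Matrix m n R) (C : Matrix n m R)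
    (D : Matrix n n R) :
    r • 1 - fromBlocks A B C D = fromBlocks (r • 1 - A) (-B) (-C) (r • 1 - D) := by
  ext (i | i) (j | j) <;> simp [sub_eq_add_neg, one_apply]

theorem det_fromBlocks_of_commute₁₁ [Fintype n] {A B C D : Matrix n n R} (hA : IsUnit A)
    (hAC : Commute A C) : (fromBlocks A B C D).det = (A * D - C * B).det := by
  have := hA.invertible
  rw [det_fromBlocks₁₁, ← det_mul, mul_sub, ← Matrix.mul_assoc, ← Matrix.mul_assoc, hAC.eq,
    Matrix.mul_assoc C, mul_invOf_self, Matrix.mul_one]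

end Matrix

/-- The matrix of `v ↦ (a, b, c) × v`. -/
def crossMatrix {R : Type*} [Ring R] (a b c : R) : Matrix (Fin 3) (Fin 3) R :=
  !![0, -c, b; c, 0, -a; -b, a, 0]

theorem det_smul_one_sub_smul_crossMatrix_sq {R : Type*} [CommRing R] (α β a b c : R) :
    (α • 1 - β • crossMatrix a b c ^ 2).det = α * (α + β * (a ^ 2 + b ^ 2 + c ^ 2)) ^ 2 := by
  simp only [crossMatrix, sq, cons_mul, Nat.succ_eq_add_one, Nat.reduceAdd, vecMul_cons, head_cons,
    zero_smul, tail_cons, neg_smul, smul_cons, smul_eq_mul, mul_zero, mul_neg, smul_empty, neg_cons,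
    neg_zero, neg_neg, neg_empty, empty_vecMul, add_zero, add_cons, zero_add, empty_add_empty,
    empty_mul, Equiv.symm_apply_apply, smul_of, det_fin_three, Fin.isValue, Matrix.sub_apply,
    Matrix.smul_apply, one_apply, ↓reduceIte, mul_one, of_apply, cons_val', cons_val_zero,
    cons_val_fin_one, cons_val_one, cons_val, Fin.reduceEq, zero_sub, neg_mul, zero_ne_one,
    one_ne_zero]
  ring

def maxwellAmplification {n : Type*} [Fintype n] [DecidableEq n] (t : ℂ) (K : Matrix n n ℂ) :
    Matrix (n ⊕ n) (n ⊕ n) ℂ :=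
  fromBlocks 1 (-((t * Complex.I) • K)) ((t * Complex.I) • K) (1 + t ^ 2 • K ^ 2)

theorem eval_charpoly_maxwellAmplification {n : Type*} [Fintype n] [DecidableEq n] {μ : ℂ}
    (hμ : μ ≠ 1) (t : ℂ) (K : Matrix n n ℂ) :
    (maxwellAmplification t K).charpoly.eval μ = ((μ - 1) ^ 2 • 1 - (μ * t ^ 2) • K ^ 2).det := by
  have hA : μ • 1 - 1 = (μ - 1) • (1 : Matrix n n ℂ) := by rw [sub_smul, one_smul]
  have hAu : IsUnit ((μ - 1) • (1 : Matrix n n ℂ)) := by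
    rw [← Algebra.algebraMap_eq_smul_one]
    exact (sub_ne_zero.2 hμ).isUnit.map _
  rw [eval_charpoly, scalar_apply, ← smul_one_eq_diagonal, maxwellAmplification,
    smul_one_sub_fromBlocks, hA, det_fromBlocks_of_commute₁₁ hAu ((Commute.one_left _).smul_left _)]
  congr 1
  simp only [smul_mul_smul_comm, Matrix.one_mul, Matrix.mul_one, Matrix.mul_sub, Matrix.mul_add,
    Matrix.neg_mul, neg_neg, ← sq, _root_.smul_pow, one_pow]
  linear_combination (norm := module) (t ^ 2 * Complex.I_sq) • K ^ 2

theorem Complex.norm_eq_one_of_sq_sub_mul_add_one_eq_zero {c : ℝ} (hc : |c| ≤ 2) {z : ℂ}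
    (hz : z ^ 2 - c * z + 1 = 0) : ‖z‖ = 1 := by
  have hre := congrArg Complex.re hz
  have him := congrArg Complex.im hz
  simp only [sq, Complex.add_re, Complex.sub_re, Complex.mul_re, Complex.ofReal_re,
    Complex.ofReal_im, zero_mul, sub_zero, Complex.one_re, Complex.zero_re, Complex.add_im,
    Complex.sub_im, Complex.mul_im, add_zero, Complex.one_im, Complex.zero_im] at hre him
  rw [Complex.norm_def, Real.sqrt_eq_one, Complex.normSq_apply]
  have hc2 : c ^ 2 ≤ 4 := by nlinarith [abs_le.mp hc]
  rcases mul_eq_zero.mp (show z.im * (2 * z.re - c) = 0 by linarith) with h | h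
  · rw [h] at hre ⊢
    nlinarith [sq_nonneg (2 * z.re - c)]
  · obtain rfl : c = 2 * z.re := by linarith
    linarith

theorem abs_two_sub_sq_mul_le_two {t s : ℝ} (ht : 0 ≤ t) (hs : 0 ≤ s) (hcfl : t * √s ≤ 2) :
    |2 - t ^ 2 * s| ≤ 2 := by
  have hsq : t ^ 2 * s = (t * √s) ^ 2 := by rw [mul_pow, Real.sq_sqrt hs]
  have := mul_nonneg ht (Real.sqrt_nonneg s)
  rw [abs_le, hsq]
  constructor <;> nlinarith

/-- All eigenvalues of the Fourier-space amplification matrix of the sequential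
explicit discretization of Maxwell's equations have absolute value 1
when `Δt·|k| < 2`. -/
theorem stmt_3 (kx ky kz Δt : ℝ) (hΔt : 0 < Δt)
    (hcfl : Δt * Real.sqrt (kx ^ 2 + ky ^ 2 + kz ^ 2) < 2)
    (K : Matrix (Fin 3) (Fin 3) ℂ)
    (hK : K = !![(0 : ℂ), (-kz : ℝ), ((ky : ℝ) : ℂ);
                 ((kz : ℝ) : ℂ), 0, ((-kx : ℝ) : ℂ);
                 ((-ky : ℝ) : ℂ), ((kx : ℝ) : ℂ), 0])
    (M : Matrix (Fin 3 ⊕ Fin 3) (Fin 3 ⊕ Fin 3) ℂ)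
    (hM : M = Matrix.fromBlocks 1 (-(((Δt : ℂ) * Complex.I) • K))
        (((Δt : ℂ) * Complex.I) • K) (1 + ((Δt : ℂ) ^ 2) • K ^ 2)) :
    ∀ μ : ℂ, M.charpoly.IsRoot μ → ‖μ‖ = 1 := by
  intro μ hμ
  rcases eq_or_ne μ 1 with rfl | hμ1
  · simp
  set s : ℝ := kx ^ 2 + ky ^ 2 + kz ^ 2 with hs
  have hKc : K = crossMatrix (kx : ℂ) ky kz := by simp [hK, crossMatrix]
  rw [IsRoot, hM, ← maxwellAmplification, eval_charpoly_maxwellAmplification hμ1, hKc,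
    det_smul_one_sub_smul_crossMatrix_sq] at hμ
  have hquad : (μ - 1) ^ 2 + μ * Δt ^ 2 * s = 0 := by
    have := (mul_eq_zero.1 hμ).resolve_left (pow_ne_zero _ (sub_ne_zero.2 hμ1))
    rw [hs]
    push_cast
    linear_combination pow_eq_zero_iff two_ne_zero |>.1 this
  refine Complex.norm_eq_one_of_sq_sub_mul_add_one_eq_zero
    (abs_two_sub_sq_mul_le_two hΔt.le (by positivity) hcfl.le) ?_
  push_cast
  linear_combination hquad
end

section
/- For any complex numbers D_x, D'_x, D_y, D'_y and Δt > 0, the 3×3 matrix M = [[1, Δt·D_y, −Δt·D_x], [Δt·D'_y, 1 + Δt²·D_y·D'_y, −Δt²·D_x·D'_y], [−Δt·D'_x, −Δt²·D_y·D'_x, 1 + Δt²·D_x·D'_x]] has characteristic polynomial (1 − z)·((1 − z)² − z·Δt²·(D_x·D'_x + D_y·D'_y)); in particular, 1 is always an eigenvalue of M. -/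
open Matrix Polynomial

/-- The amplification matrix of the sequential explicit 2D Maxwell scheme has
characteristic polynomial `(1−z)((1−z)² − z·Δt²·(DxD'x + DyD'y))`;
in particular `1` is always an eigenvalue. -/
theorem stmt_5 (Δt : ℝ) (hΔt : 0 < Δt) (Dx D'x Dy D'y : ℂ)
    (M : Matrix (Fin 3) (Fin 3) ℂ)
    (hM : M = !![1, (Δt : ℂ) * Dy, -(Δt : ℂ) * Dx;
                 (Δt : ℂ) * D'y, 1 + (Δt : ℂ) ^ 2 * Dy * D'y, -(Δt : ℂ) ^ 2 * Dx * D'y;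
                 -(Δt : ℂ) * D'x, -(Δt : ℂ) ^ 2 * Dy * D'x, 1 + (Δt : ℂ) ^ 2 * Dx * D'x]) :
    (∀ z : ℂ, (M - z • (1 : Matrix (Fin 3) (Fin 3) ℂ)).det
        = (1 - z) * ((1 - z) ^ 2 - z * (Δt : ℂ) ^ 2 * (Dx * D'x + Dy * D'y))) ∧
    M.charpoly.IsRoot 1 := by
  constructor
  · intro z
    subst hM
    simp [Matrix.det_fin_three, Matrix.smul_apply, Matrix.one_apply]
    ring
  · show M.charpoly.eval 1 = 0
    rw [Matrix.charpoly, _root_.eval_det, Matrix.matPolyEquiv_charmatrix]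
    simp only [eval_sub, eval_X, eval_C]
    have hs : (Matrix.scalar (Fin 3) (1 : ℂ)) = (1 : Matrix (Fin 3) (Fin 3) ℂ) := by
      simp
    rw [hs]
    subst hM
    simp [Matrix.det_fin_three, Matrix.one_apply]
    ring
end

section
/- Let t_x = exp(i β_x), t_y = exp(i β_y). For D_x = D'_x = (t_x − 1)(t_x + 1)/(2 t_x Δx) and D_y = D'_y = (t_y − 1)(t_y + 1)/(2 t_y Δx), one has D_x·D'_x + D_y·D'_y = (cos²β_x − 1 + cos²β_y − 1)/Δx², and the stability condition |1 + (Δt²/2)(D_x D'_x + D_y D'_y)| ≤ 1 for all β_x, β_y ∈ ℝ is equivalent to Δt/Δx ≤ √2. -/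
/-!
Since `(t - 1)(t + 1) / (2t) = (t - t⁻¹) / 2 = i sin β` for `t = exp(iβ)`, each symbol is
`D = i sin β / Δx` and `D² = (cos² β - 1) / Δx²`. The amplification factor is therefore the real number
`1 - (Δt² / 2Δx²)(sin² βx + sin² βy)`, in which `sin² βx + sin² βy` sweeps `[0, 2]`; it stays in
`[-1, 1]` exactly when `Δt² / Δx² ≤ 2`, the worst mode being `βx = βy = π / 2`.
-/

open Complex in
theorem centralDifference_symbol_eq (Δx : ℝ) (β : ℂ) :
    (exp (I * β) - 1) * (exp (I * β) + 1) / (2 * exp (I * β) * Δx) = I * sin β / Δx := by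
  have hexp : exp (I * β) ≠ 0 := exp_ne_zero _
  have hsin : 2 * I * sin β * exp (I * β) = exp (I * β) ^ 2 - 1 := by
    rw [sin, neg_mul, mul_comm β I, exp_neg]
    field_simp
    linear_combination (1 - exp (I * β) ^ 2) * I_sq
  by_cases hΔx : (Δx : ℂ) = 0
  · simp [hΔx]
  · field_simp
    linear_combination -hsin

theorem centralDifference_symbol_sq (Δx β : ℝ) :
    ((Complex.exp (Complex.I * β) - 1) * (Complex.exp (Complex.I * β) + 1)
        / (2 * Complex.exp (Complex.I * β) * Δx)) ^ 2
      = (((Real.cos β ^ 2 - 1) / Δx ^ 2 : ℝ) : ℂ) := by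
  rw [centralDifference_symbol_eq, div_pow, mul_pow, Complex.I_sq]
  push_cast
  linear_combination (-1 / (Δx : ℂ) ^ 2) * Complex.sin_sq_add_cos_sq (β : ℂ)

theorem abs_one_add_mul_cos_sq_sub_one_le_one_iff {c : ℝ} (hc : 0 ≤ c) :
    (∀ βx βy : ℝ, |1 + c * (Real.cos βx ^ 2 - 1 + (Real.cos βy ^ 2 - 1))| ≤ 1) ↔ c ≤ 1 := by
  constructor
  · intro h
    have hworst := h (Real.pi / 2) (Real.pi / 2)
    rw [Real.cos_pi_div_two, abs_le] at hworst
    linarith [hworst.1]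
  · intro hc1 βx βy
    have hx := Real.cos_sq_le_one βx
    have hy := Real.cos_sq_le_one βy
    rw [abs_le]
    constructor <;>
      nlinarith [sq_nonneg (Real.cos βx), sq_nonneg (Real.cos βy)]

theorem div_le_sqrt_two_iff {a b : ℝ} (ha : 0 < a) (hb : 0 < b) :
    a / b ≤ Real.sqrt 2 ↔ a ^ 2 / 2 / b ^ 2 ≤ 1 := by
  rw [Real.le_sqrt' (div_pos ha hb), div_pow, div_le_iff₀ (by positivity),
    div_le_iff₀ (by positivity)]
  constructor <;> intro h <;> linarith

/-- Central sequential explicit (FVTD) scheme: symbol identity and stability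
condition `Δt/Δx ≤ √2`. -/
theorem stmt_8 (Δt Δx : ℝ) (hΔt : 0 < Δt) (hΔx : 0 < Δx)
    (tx ty Dx Dy D'x D'y : ℝ → ℝ → ℂ)
    (htx : ∀ βx βy, tx βx βy = Complex.exp (Complex.I * βx))
    (hty : ∀ βx βy, ty βx βy = Complex.exp (Complex.I * βy))
    (hDx : ∀ βx βy, Dx βx βy = (tx βx βy - 1) * (tx βx βy + 1) / (2 * tx βx βy * Δx))
    (hDy : ∀ βx βy, Dy βx βy = (ty βx βy - 1) * (ty βx βy + 1) / (2 * ty βx βy * Δx))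
    (hD'x : ∀ βx βy, D'x βx βy = Dx βx βy)
    (hD'y : ∀ βx βy, D'y βx βy = Dy βx βy) :
    (∀ βx βy, Dx βx βy * D'x βx βy + Dy βx βy * D'y βx βy
        = (((Real.cos βx ^ 2 - 1 + (Real.cos βy ^ 2 - 1)) / Δx ^ 2 : ℝ) : ℂ)) ∧
    ((∀ βx βy, ‖(1 + ((Δt : ℂ) ^ 2 / 2)
        * (Dx βx βy * D'x βx βy + Dy βx βy * D'y βx βy))‖ ≤ 1)
      ↔ Δt / Δx ≤ Real.sqrt 2) := by
  have hsymbol : ∀ βx βy, Dx βx βy * D'x βx βy + Dy βx βy * D'y βx βy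
      = (((Real.cos βx ^ 2 - 1 + (Real.cos βy ^ 2 - 1)) / Δx ^ 2 : ℝ) : ℂ) := by
    intro βx βy
    rw [hD'x, hD'y, ← sq, ← sq, hDx, hDy, htx, hty, centralDifference_symbol_sq,
      centralDifference_symbol_sq]
    push_cast
    ring
  have hamplification : ∀ βx βy, ‖1 + ((Δt : ℂ) ^ 2 / 2)
      * (Dx βx βy * D'x βx βy + Dy βx βy * D'y βx βy)‖
      = |1 + Δt ^ 2 / 2 / Δx ^ 2 * (Real.cos βx ^ 2 - 1 + (Real.cos βy ^ 2 - 1))| := by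
    intro βx βy
    rw [hsymbol, ← Real.norm_eq_abs, ← Complex.norm_real]
    push_cast
    ring_nf
  refine ⟨hsymbol, ?_⟩
  simp only [hamplification]
  rw [abs_one_add_mul_cos_sq_sub_one_le_one_iff (by positivity), div_le_sqrt_two_iff hΔt hΔx]
end

section
/- Let t_x = exp(i β_x), t_y = exp(i β_y), D_x = (t_x − 1)/Δx, D_y = (t_y − 1)/Δx, D'_x = (t_x − 1)/(t_x Δx), D'_y = (t_y − 1)/(t_y Δx). Then D_x·D'_x + D_y·D'_y = 2(cos β_x + cos β_y − 2)/Δx², and the condition |1 + (Δt²/2)(D_x D'_x + D_y D'_y)| ≤ 1 for all β_x, β_y ∈ ℝ is equivalent to Δt²/Δx² ≤ 1/2. -/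
/-!
Since `t⁻¹ = conj t` on the unit circle, `(t - 1)² / t = t - 2 + t⁻¹ = 2 (cos β - 1)`, so the
symbol is the real number `2 (cos βx + cos βy - 2) / Δx² ∈ [-4 / Δx², 0]`. The amplification
factor `1 + s (cos βx + cos βy - 2)` with `s = Δt² / Δx²` is therefore at most `1`, and it stays
above `-1` for all angles exactly when it does at the worst angle `βx = βy = π`, i.e. when
`1 - 4 s ≥ -1`.
-/

open Complex in
theorem exp_I_mul_sub_one_sq_div (β : ℝ) :
    (exp (I * β) - 1) ^ 2 / exp (I * β) = ((2 * (Real.cos β - 1) : ℝ) : ℂ) := by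
  have hmul : exp (I * β) * exp (-(I * β)) = 1 := by rw [← exp_add]; simp
  have hcos : cos β = (exp (I * β) + exp (-(I * β))) / 2 := by
    rw [cos, mul_comm]; ring_nf
  rw [div_eq_mul_inv, ← exp_neg]
  push_cast
  rw [hcos]
  linear_combination (exp (I * β) - 2) * hmul

open Complex in
theorem forward_mul_backward_difference_symbol (h β : ℝ) :
    (exp (I * β) - 1) / h * ((exp (I * β) - 1) / (exp (I * β) * h))
      = ((2 * (Real.cos β - 1) / h ^ 2 : ℝ) : ℂ) := by
  calc (exp (I * β) - 1) / h * ((exp (I * β) - 1) / (exp (I * β) * h))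
      = (exp (I * β) - 1) ^ 2 / exp (I * β) / (h : ℂ) ^ 2 := by ring
    _ = ((2 * (Real.cos β - 1) / h ^ 2 : ℝ) : ℂ) := by
      rw [exp_I_mul_sub_one_sq_div]; push_cast; rfl

theorem abs_one_add_mul_le_one_iff {s u : ℝ} (hs : 0 ≤ s) (hu : u ≤ 0) :
    |1 + s * u| ≤ 1 ↔ -2 ≤ s * u := by
  have : s * u ≤ 0 := mul_nonpos_of_nonneg_of_nonpos hs hu
  rw [abs_le]
  constructor
  · exact fun h ↦ by linarith [h.1]
  · exact fun h ↦ ⟨by linarith, by linarith⟩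

theorem stmt_10_general (Δt Δx : ℝ)
    (tx ty Dx Dy D'x D'y : ℝ → ℝ → ℂ)
    (htx : ∀ βx βy, tx βx βy = Complex.exp (Complex.I * βx))
    (hty : ∀ βx βy, ty βx βy = Complex.exp (Complex.I * βy))
    (hDx : ∀ βx βy, Dx βx βy = (tx βx βy - 1) / Δx)
    (hDy : ∀ βx βy, Dy βx βy = (ty βx βy - 1) / Δx)
    (hD'x : ∀ βx βy, D'x βx βy = (tx βx βy - 1) / (tx βx βy * Δx))
    (hD'y : ∀ βx βy, D'y βx βy = (ty βx βy - 1) / (ty βx βy * Δx)) :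
    (∀ βx βy, Dx βx βy * D'x βx βy + Dy βx βy * D'y βx βy
        = ((2 * (Real.cos βx + Real.cos βy - 2) / Δx ^ 2 : ℝ) : ℂ)) ∧
    ((∀ βx βy, ‖1 + ((Δt : ℂ) ^ 2 / 2)
        * (Dx βx βy * D'x βx βy + Dy βx βy * D'y βx βy)‖ ≤ 1)
      ↔ Δt ^ 2 / Δx ^ 2 ≤ 1 / 2) := by
  have hsymbol : ∀ βx βy, Dx βx βy * D'x βx βy + Dy βx βy * D'y βx βy
      = ((2 * (Real.cos βx + Real.cos βy - 2) / Δx ^ 2 : ℝ) : ℂ) := by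
    intro βx βy
    rw [hDx, hDy, hD'x, hD'y, htx, hty, forward_mul_backward_difference_symbol,
      forward_mul_backward_difference_symbol]
    push_cast
    ring
  refine ⟨hsymbol, ?_⟩
  set s := Δt ^ 2 / Δx ^ 2
  have hs : 0 ≤ s := by positivity
  have hnorm : ∀ βx βy, ‖1 + ((Δt : ℂ) ^ 2 / 2)
      * (Dx βx βy * D'x βx βy + Dy βx βy * D'y βx βy)‖
        = |1 + s * (Real.cos βx + Real.cos βy - 2)| := by
    intro βx βy
    rw [hsymbol, ← Real.norm_eq_abs, ← Complex.norm_real]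
    congr 1
    push_cast [s]
    ring
  have hu : ∀ βx βy, Real.cos βx + Real.cos βy - 2 ≤ 0 := fun βx βy ↦ by
    linarith [Real.cos_le_one βx, Real.cos_le_one βy]
  simp only [hnorm, abs_one_add_mul_le_one_iff hs (hu _ _)]
  constructor
  · intro h
    have := h Real.pi Real.pi
    rw [Real.cos_pi] at this
    linarith
  · intro h βx βy
    nlinarith [Real.neg_one_le_cos βx, Real.neg_one_le_cos βy]

/-- Original Yee scheme in 2D with `Δy = Δx`: symbol identity and the classical
stability condition `Δt²/Δx² ≤ 1/2`. -/
theorem stmt_10 (Δt Δx : ℝ) (hΔt : 0 < Δt) (hΔx : 0 < Δx)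
    (tx ty Dx Dy D'x D'y : ℝ → ℝ → ℂ)
    (htx : ∀ βx βy, tx βx βy = Complex.exp (Complex.I * βx))
    (hty : ∀ βx βy, ty βx βy = Complex.exp (Complex.I * βy))
    (hDx : ∀ βx βy, Dx βx βy = (tx βx βy - 1) / Δx)
    (hDy : ∀ βx βy, Dy βx βy = (ty βx βy - 1) / Δx)
    (hD'x : ∀ βx βy, D'x βx βy = (tx βx βy - 1) / (tx βx βy * Δx))
    (hD'y : ∀ βx βy, D'y βx βy = (ty βx βy - 1) / (ty βx βy * Δx)) :
    (∀ βx βy, Dx βx βy * D'x βx βy + Dy βx βy * D'y βx βy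
        = ((2 * (Real.cos βx + Real.cos βy - 2) / Δx ^ 2 : ℝ) : ℂ)) ∧
    ((∀ βx βy, ‖1 + ((Δt : ℂ) ^ 2 / 2)
        * (Dx βx βy * D'x βx βy + Dy βx βy * D'y βx βy)‖ ≤ 1)
      ↔ Δt ^ 2 / Δx ^ 2 ≤ 1 / 2) :=
  stmt_10_general Δt Δx tx ty Dx Dy D'x D'y htx hty hDx hDy hD'x hD'y
end

section
/- Define F(β_x, β_y, β_z) = 3 + cos β_x + cos β_y + cos β_z − cos β_x cos β_y − cos β_x cos β_z − cos β_y cos β_z − 3 cos β_x cos β_y cos β_z. Then F(β_x, β_y, β_z) ∈ [0, 8] for all real β_x, β_y, β_z, and the condition |1 − (1/4)·F(β_x, β_y, β_z)·(Δt²/Δx²)| ≤ 1 for all β_x, β_y, β_z is equivalent to Δt/Δx ≤ 1. -/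
/-- 3D extended Yee scheme: the function `F` lies in `[0,8]`, and the stability
inequality for all wavenumbers is equivalent to `Δt/Δx ≤ 1`. -/
theorem stmt_11 (Δt Δx : ℝ) (hΔt : 0 < Δt) (hΔx : 0 < Δx)
    (F : ℝ → ℝ → ℝ → ℝ)
    (hF : ∀ βx βy βz, F βx βy βz
        = 3 + Real.cos βx + Real.cos βy + Real.cos βz
          - Real.cos βx * Real.cos βy - Real.cos βx * Real.cos βz
          - Real.cos βy * Real.cos βz
          - 3 * (Real.cos βx * Real.cos βy * Real.cos βz)) :
    (∀ βx βy βz, F βx βy βz ∈ Set.Icc (0 : ℝ) 8) ∧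
    ((∀ βx βy βz, |1 - 1 / 4 * F βx βy βz * (Δt ^ 2 / Δx ^ 2)| ≤ 1)
      ↔ Δt / Δx ≤ 1) := by
  have key : ∀ βx βy βz, F βx βy βz ∈ Set.Icc (0 : ℝ) 8 := by
    intro βx βy βz
    set a := Real.cos βx
    set b := Real.cos βy
    set c := Real.cos βz
    have ha1 : a ≤ 1 := Real.cos_le_one βx
    have ha2 : -1 ≤ a := Real.neg_one_le_cos βx
    have hb1 : b ≤ 1 := Real.cos_le_one βy
    have hb2 : -1 ≤ b := Real.neg_one_le_cos βy
    have hc1 : c ≤ 1 := Real.cos_le_one βz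
    have hc2 : -1 ≤ c := Real.neg_one_le_cos βz
    have hbc1 : b * c ≤ 1 := by nlinarith
    have hbc2 : -1 ≤ b * c := by nlinarith
    rw [hF]
    constructor
    · nlinarith [mul_nonneg (mul_nonneg (by linarith : (0:ℝ) ≤ 1 + a) (by linarith : (0:ℝ) ≤ 1 + b)) (by linarith : (0:ℝ) ≤ 1 - c),
        mul_nonneg (mul_nonneg (by linarith : (0:ℝ) ≤ 1 + a) (by linarith : (0:ℝ) ≤ 1 - b)) (by linarith : (0:ℝ) ≤ 1 + c),
        mul_nonneg (mul_nonneg (by linarith : (0:ℝ) ≤ 1 - a) (by linarith : (0:ℝ) ≤ 1 + b)) (by linarith : (0:ℝ) ≤ 1 + c)]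
    · nlinarith [mul_nonneg (by linarith : (0:ℝ) ≤ 1 + a) (by linarith : (0:ℝ) ≤ 1 + b * c),
        mul_nonneg (by linarith : (0:ℝ) ≤ 1 - a) (mul_nonneg (by linarith : (0:ℝ) ≤ 1 - b) (by linarith : (0:ℝ) ≤ 1 - c)),
        mul_nonneg (by linarith : (0:ℝ) ≤ 1 - a) (by linarith : (0:ℝ) ≤ 1 - b * c)]
  refine ⟨key, ?_, ?_⟩
  · intro h
    have h8 : F 0 0 Real.pi = 8 := by
      rw [hF]; simp [Real.cos_pi]; ring
    have := h 0 0 Real.pi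
    rw [h8] at this
    have hr : Δt ^ 2 / Δx ^ 2 ≤ 1 := by
      rw [abs_le] at this
      have hpos : (0:ℝ) < Δx ^ 2 := by positivity
      rcases this with ⟨h1, h2⟩
      nlinarith [div_nonneg (le_of_lt (by positivity : (0:ℝ) < Δt ^ 2)) hpos.le]
    have hdiv : Δt / Δx ≤ 1 := by
      have h2 : (Δt / Δx) ^ 2 ≤ 1 := by
        rw [div_pow]; exact hr
      nlinarith [div_pos hΔt hΔx]
    exact hdiv
  · intro h βx βy βz
    have hr : Δt ^ 2 / Δx ^ 2 ≤ 1 := by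
      have h2 : (Δt / Δx) ^ 2 ≤ 1 := by
        have hpos : 0 < Δt / Δx := div_pos hΔt hΔx
        nlinarith
      rw [div_pow] at h2; exact h2
    have hrpos : 0 ≤ Δt ^ 2 / Δx ^ 2 := by positivity
    obtain ⟨hF0, hF8⟩ := key βx βy βz
    rw [abs_le]
    constructor
    · nlinarith
    · nlinarith
end
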